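/- Let Γ be a finite 4-valent graph embedded in a disk D, all of whose complementary regions touch the boundary of the disk (no closed complementary region in the interior), with at least one vertex. Then Γ has a fork: a vertex with at least two non-opposite edges ending on ∂D. -/
import Mathlib

/-- Labels for the four edge-ends at a 4-valent vertex of a graph properly embedded in a
disk: each end either continues to another vertex (`internal`) or runs to the boundary of
the disk (`boundary`). -/
inductive DiskEndLabel : Type
  | internal : DiskEndLabel
  | boundary : DiskEndLabel
deriving DecidableEq

open SimpleGraph Walk Classical

lemma edge_mem_path_unique {V : Type*} {G : SimpleGraph V} {v u w₁ w₂ : V}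
    (r : G.Walk v u) (hr : r.IsPath) (h1 : s(v, w₁) ∈ r.edges) (h2 : s(v, w₂) ∈ r.edges) :
    w₁ = w₂ := by
  cases r with
  | nil => simp at h1
  | cons hadj r' =>
    rename_i x
    have hv : v ∉ r'.support := ((Walk.cons_isPath_iff _ _).mp hr).2
    rw [Walk.edges_cons, List.mem_cons] at h1 h2
    have aux : ∀ w, s(v, w) = s(v, x) ∨ s(v, w) ∈ r'.edges → w = x := by
      intro w h
      rcases h with h | h
      · rw [Sym2.eq_iff] at h
        rcases h with ⟨-, rfl⟩ | ⟨rfl, rfl⟩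
        · rfl
        · exact absurd rfl hadj.ne
      · exact absurd (r'.fst_mem_support_of_mem_edges h) hv
    rw [aux w₁ h1, aux w₂ h2]

lemma exists_degree_le_one {V : Type*} [Fintype V] [Nonempty V]
    (G : SimpleGraph V) [DecidableRel G.Adj] (hforest : G.IsAcyclic) :
    ∃ v, G.degree v ≤ 1 := by
  classical
  set P : ℕ → Prop := fun n => ∃ (u v : V) (p : G.Walk u v), p.IsPath ∧ p.length = n with hP
  have hP0 : P 0 := ⟨Classical.arbitrary V, Classical.arbitrary V, Walk.nil, Walk.IsPath.nil, rfl⟩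
  set n := Nat.findGreatest P (Fintype.card V) with hn
  have hPn : P n := Nat.findGreatest_spec (Nat.zero_le _) hP0
  obtain ⟨u, v, p, hp, hlen⟩ := hPn
  have hbound : n + 1 ≤ Fintype.card V := by
    have hnd := hp.support_nodup
    have h2 : p.support.length = n + 1 := by rw [Walk.length_support, hlen]
    calc n + 1 = p.support.length := h2.symm
    _ = p.support.toFinset.card := (List.toFinset_card_of_nodup hnd).symm
    _ ≤ Fintype.card V := Finset.card_le_univ _
  have hmax : ¬ P (n + 1) := Nat.findGreatest_is_greatest (Nat.lt_succ_self n) hbound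
  refine ⟨v, ?_⟩
  have key : ∀ w, G.Adj v w → s(v, w) ∈ p.reverse.edges := by
    intro w hvw
    have hws : w ∈ p.support := by
      by_contra hws
      apply hmax
      refine ⟨w, u, Walk.cons hvw.symm p.reverse, ?_, by simp [hlen]⟩
      exact hp.reverse.cons (by simpa using hws)
    have hedge : s(v, w) ∈ p.edges := by
      by_contra hedge
      have hq : (p.dropUntil w hws).IsPath := hp.dropUntil hws
      have hne : s(v, w) ∉ (p.dropUntil w hws).edges :=
        fun h => hedge (p.edges_dropUntil_subset hws h)
      exact hforest _ ((Walk.cons_isCycle_iff _ hvw).mpr ⟨hq, hne⟩)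
    simpa using hedge
  rcases Finset.eq_empty_or_nonempty (G.neighborFinset v) with he | ⟨w₀, hw₀⟩
  · rw [← SimpleGraph.card_neighborFinset_eq_degree, he]; simp
  · rw [SimpleGraph.mem_neighborFinset] at hw₀
    rw [← SimpleGraph.card_neighborFinset_eq_degree]
    have hsub : G.neighborFinset v ⊆ {w₀} := by
      intro w hw
      rw [SimpleGraph.mem_neighborFinset] at hw
      rw [Finset.mem_singleton]
      exact edge_mem_path_unique p.reverse hp.reverse (key w hw) (key w₀ hw₀)
    calc (G.neighborFinset v).card ≤ ({w₀} : Finset V).card := Finset.card_le_card hsub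
    _ = 1 := Finset.card_singleton _

lemma fin4_nonopposite : ∀ s : Finset (Fin 4), 3 ≤ s.card →
    ∃ i ∈ s, ∃ j ∈ s, j ≠ i ∧ j ≠ i + 2 := by decide

/-- A finite 4-valent graph properly embedded in a disk, all of whose complementary regions
touch the boundary (so the internal subgraph `Γ'` is a forest), with at least one vertex,
has a fork: a vertex with two non-opposite edge-ends (the four ends at a vertex are
cyclically ordered by `Fin 4`, opposite meaning `j = i + 2`) ending on the boundary circle. -/
theorem disk_four_valent_graph_has_fork
    {V : Type*} [Fintype V] [Nonempty V]
    (Γ' : SimpleGraph V) [DecidableRel Γ'.Adj]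
    (hforest : Γ'.IsAcyclic)
    (e : V → Fin 4 → DiskEndLabel)
    (hdeg : ∀ v, Γ'.degree v =
      (Finset.univ.filter fun i => e v i = DiskEndLabel.internal).card) :
    ∃ (v : V) (i j : Fin 4), j ≠ i ∧ j ≠ i + 2 ∧
      e v i = DiskEndLabel.boundary ∧ e v j = DiskEndLabel.boundary := by
  obtain ⟨v, hv⟩ := exists_degree_le_one Γ' hforest
  rw [hdeg v] at hv
  set s : Finset (Fin 4) := Finset.univ.filter fun i => e v i = DiskEndLabel.boundary with hs
  have hcompl : s = (Finset.univ.filter fun i => e v i = DiskEndLabel.internal)ᶜ := by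
    ext i
    simp only [hs, Finset.mem_filter, Finset.mem_compl, Finset.mem_univ, true_and]
    cases h : e v i <;> simp
  have hcard : 3 ≤ s.card := by
    rw [hcompl, Finset.card_compl]
    have h4 : Fintype.card (Fin 4) = 4 := by simp
    omega
  obtain ⟨i, hi, j, hj, hji, hji2⟩ := fin4_nonopposite s hcard
  rw [hs, Finset.mem_filter] at hi hj
  exact ⟨v, i, j, hji, hji2, hi.2, hj.2⟩
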